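/- Let (T,c) be an algebraic tree with component topology τ. Then the branch point map c : T³ → T is continuous (with T³ carrying the product topology). -/

import Mathlib

/-!
Both the component `S_x(y) = {z | x ∉ [y,z]}` and its complement
`{z | x ∈ [y,z]}` are convex, i.e. closed under taking intervals. Since `c(u,v,w)` lies in
each of `[u,v]`, `[u,w]` and `[v,w]`, it therefore lies in `S_x(y)` exactly when at least two
of `u, v, w` do, so the preimage of a subbasic open set under `c` is a finite union of open boxes.
-/

variable {T : Type*}

/-- An algebraic tree: a symmetric branch point map satisfying the
2-point, 3-point and 4-point conditions (BPM1)–(BPM4). -/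
def IsAlgTree (c : T → T → T → T) : Prop :=
  (∀ x y z, c x y z = c y x z) ∧
  (∀ x y z, c x y z = c x z y) ∧
  (∀ x y, c x y y = y) ∧
  (∀ x y z, c x y (c x y z) = c x y z) ∧
  (∀ x₁ x₂ x₃ x₄, c x₁ x₂ x₃ = c x₁ x₂ x₄ ∨ c x₁ x₂ x₃ = c x₁ x₃ x₄ ∨
    c x₁ x₂ x₃ = c x₂ x₃ x₄)

/-- The interval `[x,y] = {w : c(x,y,w) = w}`. -/
def interval (c : T → T → T → T) (x y : T) : Set T := {w | c x y w = w}

/-- The component `S_x(y)` of `T \ {x}` containing `y`. -/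
def component (c : T → T → T → T) (x y : T) : Set T := {z | z ≠ x ∧ c x y z ≠ x}

/-- The component topology, generated by the components `S_x(y)`, `x ≠ y`. -/
def componentTopology (c : T → T → T → T) : TopologicalSpace T :=
  TopologicalSpace.generateFrom {S | ∃ x y, x ≠ y ∧ S = component c x y}

def IsConvex (c : T → T → T → T) (S : Set T) : Prop :=
  ∀ ⦃u v⦄, u ∈ S → v ∈ S → interval c u v ⊆ S

theorem mem_interval {c : T → T → T → T} {x y w : T} : w ∈ interval c x y ↔ c x y w = w :=
  Iff.rfl

namespace IsAlgTree

variable {c : T → T → T → T}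

theorem branch_comm (hc : IsAlgTree c) (x y z : T) : c x y z = c y x z := hc.1 x y z

theorem branch_comm' (hc : IsAlgTree c) (x y z : T) : c x y z = c x z y := hc.2.1 x y z

theorem branch_rotate (hc : IsAlgTree c) (x y z : T) : c x y z = c y z x :=
  (hc.branch_comm x y z).trans (hc.branch_comm' y x z)

theorem branch_self_right (hc : IsAlgTree c) (x y : T) : c x y y = y := hc.2.2.1 x y

theorem branch_self_left (hc : IsAlgTree c) (x y : T) : c x y x = x :=
  (hc.branch_comm x y x).trans (hc.branch_self_right y x)

theorem branch_mem_interval (hc : IsAlgTree c) (x y z : T) : c x y z ∈ interval c x y :=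
  hc.2.2.2.1 x y z

theorem four_point (hc : IsAlgTree c) (x₁ x₂ x₃ x₄ : T) :
    c x₁ x₂ x₃ = c x₁ x₂ x₄ ∨ c x₁ x₂ x₃ = c x₁ x₃ x₄ ∨ c x₁ x₂ x₃ = c x₂ x₃ x₄ :=
  hc.2.2.2.2 x₁ x₂ x₃ x₄

theorem interval_comm (hc : IsAlgTree c) (x y : T) : interval c x y = interval c y x :=
  Set.ext fun w => by rw [mem_interval, mem_interval, hc.branch_comm]

theorem eq_branch_of_mem_interval (hc : IsAlgTree c) {x y z w : T} (hxy : w ∈ interval c x y)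
    (hxz : w ∈ interval c x z) (hyz : w ∈ interval c y z) : c x y z = w := by
  rcases hc.four_point x y z w with h | h | h
  exacts [h.trans hxy, h.trans hxz, h.trans hyz]

theorem interval_subset_union (hc : IsAlgTree c) (u v y : T) :
    interval c u v ⊆ interval c u y ∪ interval c y v := by
  intro p (hp : c u v p = p)
  rcases hc.four_point u v p y with h | h | h
  · left
    have hp' : p = c u y v := hp.symm.trans (h.trans (hc.branch_comm' u v y))
    rw [mem_interval, hp']
    exact hc.branch_mem_interval u y v
  · left
    rw [mem_interval, hc.branch_comm' u y p, ← h, hp]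
  · right
    rw [mem_interval, hc.branch_comm y v p, hc.branch_comm' v y p, ← h, hp]

theorem interval_subset_interval (hc : IsAlgTree c) {x y u : T} (hu : u ∈ interval c x y) :
    interval c x u ⊆ interval c x y := by
  intro w (hw : c x u w = w)
  rcases hc.interval_subset_union x u y hw with hxy | (hyu : c y u w = w)
  · exact hxy
  rw [mem_interval]
  rcases hc.four_point x y w u with h | h | h
  · have hb : c x y w = u := h.trans hu
    -- `w ∈ [x,u]` and `u = c(x,y,w) ∈ [x,w]` force `w = u`
    have hwu : c x w u = u := by
      rw [← hb, hc.branch_comm' x y w]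
      exact hc.branch_mem_interval x w y
    rw [hb, ← hwu, ← hc.branch_comm' x u w, hw]
  · rw [h, ← hc.branch_comm' x u w, hw]
  · rw [h, ← hc.branch_comm' y u w, hyu]

theorem isConvex_setOf_mem_interval (hc : IsAlgTree c) (x y : T) :
    IsConvex c {z | x ∈ interval c y z} := by
  intro u v (hu : x ∈ interval c y u) (hv : x ∈ interval c y v) p hp
  rcases hc.interval_subset_union y u p hu with hyp | hpu
  · exact hyp
  rcases hc.interval_subset_union y v p hv with hyp | hpv
  · exact hyp
  have huv : x ∈ interval c u v :=
    hc.interval_subset_interval hp (by rwa [hc.interval_comm])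
  have hpx : p = x :=
    ((hc.branch_rotate p u v).trans hp).symm.trans (hc.eq_branch_of_mem_interval hpu hpv huv)
  subst hpx
  exact hc.branch_self_right y p

theorem isConvex_setOf_notMem_interval (hc : IsAlgTree c) (x y : T) :
    IsConvex c {z | x ∉ interval c y z} := by
  intro u v hu hv p hp hxp
  rcases hc.interval_subset_union u v y hp with hpu | hpv
  · rw [hc.interval_comm] at hpu
    exact hu (hc.interval_subset_interval hpu hxp)
  · exact hv (hc.interval_subset_interval hpv hxp)

theorem component_eq_setOf (hc : IsAlgTree c) (x y : T) :
    component c x y = {z | x ∉ interval c y z} := by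
  ext z
  rw [Set.mem_ofPred_eq, mem_interval, ← hc.branch_rotate]
  refine ⟨fun h => h.2, fun h => ⟨?_, h⟩⟩
  rintro rfl
  exact h (hc.branch_self_left z y)

theorem isConvex_component (hc : IsAlgTree c) (x y : T) : IsConvex c (component c x y) := by
  rw [hc.component_eq_setOf]
  exact hc.isConvex_setOf_notMem_interval x y

theorem isConvex_compl_component (hc : IsAlgTree c) (x y : T) :
    IsConvex c (component c x y)ᶜ := by
  rw [hc.component_eq_setOf, Set.compl_ofPred]
  simpa only [not_not] using hc.isConvex_setOf_mem_interval x y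

theorem branch_mem_iff_of_isConvex (hc : IsAlgTree c) {S : Set T} (hS : IsConvex c S)
    (hSc : IsConvex c Sᶜ) (u v w : T) :
    c u v w ∈ S ↔ u ∈ S ∧ v ∈ S ∨ u ∈ S ∧ w ∈ S ∨ v ∈ S ∧ w ∈ S := by
  have huv : c u v w ∈ interval c u v := hc.branch_mem_interval u v w
  have huw : c u v w ∈ interval c u w := by
    rw [hc.branch_comm' u v w]
    exact hc.branch_mem_interval u w v
  have hvw : c u v w ∈ interval c v w := by
    rw [hc.branch_rotate u v w]
    exact hc.branch_mem_interval v w u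
  constructor
  · intro h
    by_contra hn
    have hSc' : u ∈ Sᶜ ∧ v ∈ Sᶜ ∨ u ∈ Sᶜ ∧ w ∈ Sᶜ ∨ v ∈ Sᶜ ∧ w ∈ Sᶜ := by
      simp only [Set.mem_compl_iff]
      tauto
    rcases hSc' with ⟨hu, hv⟩ | ⟨hu, hw⟩ | ⟨hv, hw⟩
    exacts [hSc hu hv huv h, hSc hu hw huw h, hSc hv hw hvw h]
  · rintro (⟨hu, hv⟩ | ⟨hu, hw⟩ | ⟨hv, hw⟩)
    exacts [hS hu hv huv, hS hu hw huw, hS hv hw hvw]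

theorem isOpen_preimage_branch [TopologicalSpace T] (hc : IsAlgTree c) {S : Set T}
    (hS : IsOpen S) (hSconv : IsConvex c S) (hSconv' : IsConvex c Sᶜ) :
    IsOpen ((fun p : T × T × T => c p.1 p.2.1 p.2.2) ⁻¹' S) := by
  have h₁ : IsOpen {p : T × T × T | p.1 ∈ S} := hS.preimage continuous_fst
  have h₂ : IsOpen {p : T × T × T | p.2.1 ∈ S} := hS.preimage (continuous_fst.comp continuous_snd)
  have h₃ : IsOpen {p : T × T × T | p.2.2 ∈ S} := hS.preimage (continuous_snd.comp continuous_snd)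
  have hpre : (fun p : T × T × T => c p.1 p.2.1 p.2.2) ⁻¹' S =
      {p | p.1 ∈ S ∧ p.2.1 ∈ S ∨ p.1 ∈ S ∧ p.2.2 ∈ S ∨ p.2.1 ∈ S ∧ p.2.2 ∈ S} :=
    Set.ext fun p => hc.branch_mem_iff_of_isConvex hSconv hSconv' p.1 p.2.1 p.2.2
  rw [hpre]
  exact (h₁.inter h₂).union ((h₁.inter h₃).union (h₂.inter h₃))

end IsAlgTree

theorem stmt_17_general (c : T → T → T → T) (hc : IsAlgTree c) :
    letI : TopologicalSpace T := componentTopology c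
    Continuous (fun p : T × T × T => c p.1 p.2.1 p.2.2) := by
  let _ : TopologicalSpace T := componentTopology c
  refine continuous_generateFrom_iff.mpr ?_
  rintro _ ⟨x, y, hxy, rfl⟩
  exact hc.isOpen_preimage_branch (TopologicalSpace.isOpen_generateFrom_of_mem ⟨x, y, hxy, rfl⟩)
    (hc.isConvex_component x y) (hc.isConvex_compl_component x y)

theorem stmt_17 [Nonempty T] (c : T → T → T → T) (hc : IsAlgTree c) :
    letI : TopologicalSpace T := componentTopology c
    Continuous (fun p : T × T × T => c p.1 p.2.1 p.2.2) :=
  stmt_17_general c hc
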